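/- Let π be an odd prime of ℤ[i] and define the Gauss sum g(r, πˡ) = Σ_{x mod πˡ} (x/πˡ) ẽ(rx/πˡ), where ẽ(z) = exp(2πi(z/(2i) − z̄/(2i))). If πʰ ∥ k (i.e., h = ord_π(k)) and l ≥ h + 2, then g(k, πˡ) = 0. -/

import Mathlib

/-!
Write `k = π'ʰ k'` with `π' ∤ k'` and put `t = π'^(l-h-1) s`. Since `l ≥ h + 2`, `π' ∣ t`, so
`x ↦ x + t` permutes the residues mod `π'ˡ` while fixing `(x/π')`, and it multiplies
`ẽ(k x / π'ˡ)` by `ζ = ẽ(k' s / π')`. Hence the sum `G` satisfies `G = ζ G`, and `s` can be chosen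
with `ζ ≠ 1` because `k' / π'` is not a Gaussian integer.
-/

/-- The additive character ẽ(z) = exp(2πi(z/(2i) − z̄/(2i))) on ℂ. -/
noncomputable def etilde (z : ℂ) : ℂ :=
  Complex.exp (2 * Real.pi * Complex.I *
    (z / (2 * Complex.I) - (starRingEnd ℂ) z / (2 * Complex.I)))

open Complex

section ResidueSystem

variable {R M : Type*} [CommRing R] [AddCommMonoid M]

theorem Finset.sum_add_eq_sum_of_forall_existsUnique {S : Finset R} {m : R}
    (hS : ∀ y, ∃! x, x ∈ S ∧ m ∣ y - x) {f : R → M} (hf : ∀ x y, m ∣ x - y → f x = f y)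
    (t : R) : ∑ x ∈ S, f (x + t) = ∑ x ∈ S, f x := by
  choose σ hσ using fun y => (hS y).exists
  have eq_of_dvd : ∀ {x y}, x ∈ S → y ∈ S → m ∣ x - y → x = y := fun {x y} hx hy hxy =>
    (hS x).unique ⟨hx, by simp⟩ ⟨hy, hxy⟩
  refine Finset.sum_bij (fun x _ => σ (x + t)) (fun x _ => (hσ _).1) ?_ ?_ ?_
  · intro x hx y hy hxy
    refine eq_of_dvd hx hy ?_
    have := dvd_sub (hσ (x + t)).2 (hσ (y + t)).2
    rwa [hxy, show x + t - σ (y + t) - (y + t - σ (y + t)) = x - y by ring] at this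
  · intro z hz
    refine ⟨σ (z - t), (hσ _).1, eq_of_dvd (hσ _).1 hz ?_⟩
    have := dvd_add (hσ (z - t)).2 (hσ (σ (z - t) + t)).2
    rwa [← dvd_neg, show -(z - t - σ (z - t) + (σ (z - t) + t - σ (σ (z - t) + t)))
      = σ (σ (z - t) + t) - z by ring] at this
  · intro x _
    exact hf _ _ (hσ _).2

end ResidueSystem

section EulerCriterion

variable {R : Type*} [CommRing R]

theorem Int.eq_of_dvd_intCast_sub {p : R} (hp : ¬IsUnit p) (h2 : IsCoprime p 2) {u v : ℤ}
    (hu : u = 1 ∨ u = -1) (hv : v = 1 ∨ v = -1) (huv : p ∣ ((u - v : ℤ) : R)) : u = v := by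
  by_contra hne
  have hp2 : p ∣ (2 : R) := by
    rcases hu with rfl | rfl <;> rcases hv with rfl | rfl <;> simp_all
  exact hp (h2.isUnit_of_dvd' dvd_rfl hp2)

theorem eq_of_dvd_sub_of_euler_criterion {p : R} (hp : Prime p) (h2 : IsCoprime p 2)
    {e : ℕ} {q : R → ℤ}
    (hq : ∀ a, (p ∣ a → q a = 0) ∧ (¬p ∣ a → (q a = 1 ∨ q a = -1) ∧ p ∣ a ^ e - q a))
    {x y : R} (hxy : p ∣ x - y) : q x = q y := by
  by_cases hx : p ∣ x
  · have hy : p ∣ y := by simpa using dvd_sub hx hxy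
    rw [(hq x).1 hx, (hq y).1 hy]
  have hy : ¬p ∣ y := fun hy => hx (by simpa using dvd_add hy hxy)
  obtain ⟨hx1, hx2⟩ := (hq x).2 hx
  obtain ⟨hy1, hy2⟩ := (hq y).2 hy
  refine Int.eq_of_dvd_intCast_sub hp.not_isUnit h2 hx1 hy1 ?_
  have hpow : p ∣ x ^ e - y ^ e := hxy.trans (sub_dvd_pow_sub_pow x y e)
  have := dvd_sub (dvd_add hpow hy2) hx2
  rwa [show x ^ e - y ^ e + (y ^ e - q y) - (x ^ e - q x) = ((q x - q y : ℤ) : R) by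
    push_cast; ring] at this

end EulerCriterion

theorem etilde_eq_exp_im (z : ℂ) : etilde z = exp (2 * Real.pi * I * z.im) := by
  rw [etilde, div_sub_div_same, sub_conj]
  congr 1
  field_simp
  push_cast
  ring

theorem etilde_add (z w : ℂ) : etilde (z + w) = etilde z * etilde w := by
  rw [etilde, etilde, etilde, ← exp_add, map_add]
  ring_nf

theorem etilde_eq_one_iff {z : ℂ} : etilde z = 1 ↔ ∃ n : ℤ, z.im = n := by
  rw [etilde_eq_exp_im, exp_eq_one_iff]
  refine exists_congr fun n => ⟨fun h => ?_, fun h => by rw [h]; push_cast; ring⟩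
  have := mul_left_cancel₀ (by simp [Real.pi_ne_zero] : 2 * (Real.pi : ℂ) * I ≠ 0)
    (h.trans (mul_comm _ _))
  exact_mod_cast this

namespace GaussianInt

theorem etilde_toComplex (g : GaussianInt) : etilde g = 1 :=
  etilde_eq_one_iff.2 ⟨g.im, (intCast_im g).symm⟩

theorem etilde_toComplex_div_eq_of_dvd_sub {m a b : GaussianInt} (hm : m ≠ 0)
    (hab : m ∣ a - b) : etilde (a / m) = etilde (b / m) := by
  obtain ⟨u, hu⟩ := hab
  have hm' : (m : ℂ) ≠ 0 := by rwa [Ne, toComplex_eq_zero]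
  rw [sub_eq_iff_eq_add'.1 hu, map_add, map_mul, add_div, mul_div_cancel_left₀ _ hm', etilde_add,
    etilde_toComplex, mul_one]

theorem etilde_toComplex_pow_mul_add_div_pow {π' k x s : GaussianInt} (hπ : π' ≠ 0) {h l : ℕ}
    (hl : h < l) :
    etilde ((π' ^ h * k * (x + π' ^ (l - h - 1) * s) : GaussianInt) / (π' ^ l : GaussianInt))
      = etilde ((π' ^ h * k * x : GaussianInt) / (π' ^ l : GaussianInt))
        * etilde ((k * s : GaussianInt) / π') := by
  have hpow : π' ^ h * π' ^ (l - h - 1) * π' = π' ^ l := by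
    rw [← pow_add, ← pow_succ]
    congr 1
    omega
  have hshift : ((π' ^ h * k * (π' ^ (l - h - 1) * s) : GaussianInt) : ℂ) / (π' ^ l : GaussianInt)
      = (k * s : GaussianInt) / π' := by
    rw [div_eq_div_iff (by simpa using pow_ne_zero l hπ) (by simpa using hπ), ← map_mul,
      ← map_mul, ← hpow]
    congr 1
    ring
  rw [mul_add, map_add, add_div, etilde_add, hshift]

/-- Integrality of `a / p` is tested by `s = 1` (imaginary part) and `s = i` (real part). -/
theorem dvd_of_forall_etilde_eq_one {p a : GaussianInt} (hp : p ≠ 0)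
    (h : ∀ s, etilde ((a * s : GaussianInt) / p) = 1) : p ∣ a := by
  set z : ℂ := a / p
  have h1 : etilde z = 1 := by simpa using h 1
  obtain ⟨n, hn⟩ := etilde_eq_one_iff.1 h1
  have hzI : ((a * ⟨0, 1⟩ : GaussianInt) : ℂ) / p = z * I := by
    rw [map_mul, toComplex_def' 0 1, mul_div_right_comm]
    simp [z]
  obtain ⟨m, hm⟩ := etilde_eq_one_iff.1 (h ⟨0, 1⟩)
  rw [hzI, mul_I_im] at hm
  refine ⟨⟨m, n⟩, toComplex_injective ?_⟩
  have hp' : (p : ℂ) ≠ 0 := by rwa [Ne, toComplex_eq_zero]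
  have hz : ((⟨m, n⟩ : GaussianInt) : ℂ) = z := by
    apply Complex.ext <;> simp [toComplex_def, hm, hn]
  rw [map_mul, hz, mul_div_cancel₀ _ hp']

end GaussianInt

theorem stmt_11 (π' : GaussianInt) (hπ : Prime π') (hodd : IsCoprime π' (2 : GaussianInt))
    (q : GaussianInt → ℤ)
    -- q is the quadratic residue symbol mod π', characterized by the Euler criterion
    (hq : ∀ a : GaussianInt,
      (π' ∣ a → q a = 0) ∧
      (¬ π' ∣ a → (q a = 1 ∨ q a = -1) ∧
        π' ∣ (a ^ (((Zsqrtd.norm π').natAbs - 1) / 2) - (q a : GaussianInt))))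
    (l h : ℕ) (k : GaussianInt)
    (hk : π' ^ h ∣ k ∧ ¬ π' ^ (h + 1) ∣ k)  -- h = ord_π'(k)
    (hl : h + 2 ≤ l)
    (S : Finset GaussianInt)
    (hS : ∀ y : GaussianInt, ∃! x, x ∈ S ∧ π' ^ l ∣ (y - x)) :
    ∑ x ∈ S, ((q x : ℂ)) ^ l *
        etilde (GaussianInt.toComplex (k * x) / GaussianInt.toComplex (π' ^ l)) = 0 := by
  obtain ⟨⟨k', rfl⟩, hk'⟩ := hk
  have hπk' : ¬π' ∣ k' := fun ⟨c, hc⟩ => hk' ⟨c, by rw [hc, pow_succ]; ring⟩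
  obtain ⟨s, hζ⟩ : ∃ s, etilde ((k' * s : GaussianInt) / π') ≠ 1 := by
    by_contra! h
    exact hπk' (GaussianInt.dvd_of_forall_etilde_eq_one hπ.ne_zero h)
  have hq_congr : ∀ {x y}, π' ∣ x - y → q x = q y :=
    eq_of_dvd_sub_of_euler_criterion hπ hodd hq
  set f : GaussianInt → ℂ := fun x =>
    (q x : ℂ) ^ l * etilde ((π' ^ h * k' * x : GaussianInt) / (π' ^ l : GaussianInt))
  have hf_periodic : ∀ x y, π' ^ l ∣ x - y → f x = f y := fun x y hxy => by
    have hkxy : π' ^ l ∣ π' ^ h * k' * x - π' ^ h * k' * y := by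
      rw [← mul_sub]
      exact dvd_mul_of_dvd_right hxy _
    simp only [f, hq_congr ((dvd_pow_self π' (by omega)).trans hxy),
      GaussianInt.etilde_toComplex_div_eq_of_dvd_sub (pow_ne_zero l hπ.ne_zero) hkxy]
  have hf_shift : ∀ x, f (x + π' ^ (l - h - 1) * s) = etilde ((k' * s : GaussianInt) / π') * f x :=
    fun x => by
      have hπt : π' ∣ x + π' ^ (l - h - 1) * s - x := by
        simpa using (dvd_pow_self π' (by omega)).mul_right s
      simp only [f, hq_congr hπt,
        GaussianInt.etilde_toComplex_pow_mul_add_div_pow hπ.ne_zero (by omega : h < l)]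
      ring
  have hsum := Finset.sum_add_eq_sum_of_forall_existsUnique hS hf_periodic (π' ^ (l - h - 1) * s)
  simp only [hf_shift, ← Finset.mul_sum] at hsum
  exact eq_zero_of_mul_eq_self_left hζ hsum
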